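/- Let X be a δ-hyperbolic geodesic proper metric space and r : ℕ → X a (K,ε)-quasigeodesic ray. Suppose γ_n is a sequence of geodesic segments in X, each of which intersects the α-neighborhood of r([n_i, ∞)) for some sequence n_i → ∞, and suppose both endpoints of γ_n converge in X̂ to points a, b ∈ ∂X with a = b as points of the boundary identified by the sequence leaving every bounded set. Then r(n) converges to the point a = b in ∂X as n → ∞. -/

import Mathlib

open Metric Set

/-- The Gromov product of `x` and `y` with respect to the basepoint `o`. -/
noncomputable def gromovProd {X : Type*} [MetricSpace X] (o x y : X) : ℝ :=
  (dist o x + dist o y - dist x y) / 2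

/-- `X` is δ-hyperbolic in the sense of Gromov (four-point condition). -/
def DeltaHyperbolic (X : Type*) [MetricSpace X] (δ : ℝ) : Prop :=
  ∀ o x y z : X, min (gromovProd o x y) (gromovProd o y z) ≤ gromovProd o x z + δ

/-- `X` is a geodesic metric space. -/
def GeodesicSpace (X : Type*) [MetricSpace X] : Prop :=
  ∀ x y : X, ∃ f : ℝ → X, f 0 = x ∧ f (dist x y) = y ∧
    ∀ s ∈ Icc (0:ℝ) (dist x y), ∀ t ∈ Icc (0:ℝ) (dist x y), dist (f s) (f t) = |s - t|

/-- A geodesic from `x` to `y`, parametrized by arc length on `[0, dist x y]`. -/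
def IsGeodesicFrom {X : Type*} [MetricSpace X] (f : ℝ → X) (x y : X) : Prop :=
  f 0 = x ∧ f (dist x y) = y ∧
  ∀ s ∈ Icc (0:ℝ) (dist x y), ∀ t ∈ Icc (0:ℝ) (dist x y), dist (f s) (f t) = |s - t|

section Aux

variable {X : Type*} [MetricSpace X]

lemma gp_comm (o x y : X) : gromovProd o x y = gromovProd o y x := by
  unfold gromovProd; rw [dist_comm x y]; ring

lemma gp_le_dist (o x y : X) : gromovProd o x y ≤ dist o x := by
  have h := dist_triangle o x y
  unfold gromovProd; linarith

lemma sub_dist_le_gp (o x y : X) : dist o x - dist x y ≤ gromovProd o x y := by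
  have h := dist_triangle o y x
  have h2 : dist y x = dist x y := dist_comm y x
  unfold gromovProd; linarith

lemma gp_self (o x : X) : gromovProd o x x = dist o x := by
  unfold gromovProd; simp

lemma hyp4 {δ : ℝ} (hhyp : DeltaHyperbolic X δ) (o x y z : X) :
    min (gromovProd o x y) (gromovProd o y z) - δ ≤ gromovProd o x z := by
  have := hhyp o x y z; linarith

-- geodesic lemmas
lemma geod_dist_pts {f : ℝ → X} {x y : X} (hf : IsGeodesicFrom f x y)
    {s t : ℝ} (hs : s ∈ Icc (0:ℝ) (dist x y)) (ht : t ∈ Icc (0:ℝ) (dist x y)) :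
    dist (f s) (f t) = |s - t| := hf.2.2 s hs t ht

lemma geod_dist_left {f : ℝ → X} {x y : X} (hf : IsGeodesicFrom f x y)
    {t : ℝ} (ht : t ∈ Icc (0:ℝ) (dist x y)) : dist x (f t) = t := by
  have h0 : (0:ℝ) ∈ Icc (0:ℝ) (dist x y) := ⟨le_refl _, dist_nonneg⟩
  have := hf.2.2 0 h0 t ht
  rw [hf.1] at this
  rw [this, abs_sub_comm, abs_of_nonneg (by linarith [ht.1] : (0:ℝ) ≤ t - 0)]
  ring

lemma geod_dist_right {f : ℝ → X} {x y : X} (hf : IsGeodesicFrom f x y)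
    {t : ℝ} (ht : t ∈ Icc (0:ℝ) (dist x y)) : dist (f t) y = dist x y - t := by
  have hL : dist x y ∈ Icc (0:ℝ) (dist x y) := ⟨dist_nonneg, le_refl _⟩
  have := hf.2.2 t ht (dist x y) hL
  rw [hf.2.1] at this
  rw [this, abs_of_nonpos (by linarith [ht.2])]
  ring

lemma gp_point_ge {f : ℝ → X} {x y : X} (hf : IsGeodesicFrom f x y)
    {t : ℝ} (ht : t ∈ Icc (0:ℝ) (dist x y)) (o : X) :
    gromovProd o x y ≤ gromovProd o x (f t) := by
  have h1 : dist x (f t) = t := geod_dist_left hf ht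
  have h2 : dist (f t) y = dist x y - t := geod_dist_right hf ht
  have h3 : dist o y ≤ dist o (f t) + dist (f t) y := dist_triangle _ _ _
  unfold gromovProd; rw [h1]; linarith

lemma gp_base_on_geod {f : ℝ → X} {x y : X} (hf : IsGeodesicFrom f x y)
    {t : ℝ} (ht : t ∈ Icc (0:ℝ) (dist x y)) :
    gromovProd (f t) x y = 0 := by
  have h1 : dist x (f t) = t := geod_dist_left hf ht
  have h2 : dist (f t) y = dist x y - t := geod_dist_right hf ht
  have h3 : dist (f t) x = dist x (f t) := dist_comm _ _
  unfold gromovProd; rw [h3, h1, h2]; ring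

/-- Balanced-point estimate: if a geodesic from `x` to `y` avoids `B(o,R)`, then
`(x|y)_o ≥ R - 2δ`. -/
lemma gp_ge_of_far {δ : ℝ} (hδ : 0 ≤ δ) (hhyp : DeltaHyperbolic X δ)
    {f : ℝ → X} {x y : X} (hf : IsGeodesicFrom f x y) (o : X) {R : ℝ}
    (hfar : ∀ t ∈ Icc (0:ℝ) (dist x y), R ≤ dist o (f t)) :
    R - 2*δ ≤ gromovProd o x y := by
  set L := dist x y with hLdef
  have hL0 : 0 ≤ L := dist_nonneg
  have htri1 : dist o y ≤ dist o x + L := dist_triangle o x y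
  have htri2 : dist o x ≤ dist o y + L := by
    have := dist_triangle o y x; rw [dist_comm y x] at this; exact this
  set t : ℝ := (dist o x - dist o y + L)/2 with htdef
  have ht : t ∈ Icc (0:ℝ) L := ⟨by simp only [htdef]; linarith, by simp only [htdef]; linarith⟩
  set z := f t with hzdef
  have hdx : dist x z = t := geod_dist_left hf ht
  have hdy : dist z y = L - t := geod_dist_right hf ht
  have hzxy : gromovProd z x y = 0 := gp_base_on_geod hf ht
  have hbal : gromovProd o x z = gromovProd o z y := by
    unfold gromovProd
    rw [hdx, hdy]
    simp only [htdef]; ring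
  have hid1 : gromovProd o x z + gromovProd z x o = dist o z := by
    unfold gromovProd
    rw [dist_comm z x, dist_comm z o, dist_comm x o]; ring
  have hid2 : gromovProd o z y + gromovProd z o y = dist o z := by
    unfold gromovProd
    rw [dist_comm z o]; ring
  have h4 := hhyp z x o y
  rw [hzxy] at h4
  have hR : R ≤ dist o z := hfar t ht
  have hboth : R - δ ≤ gromovProd o x z := by
    rcases min_le_iff.1 h4 with h | h
    · linarith
    · rw [hbal]; linarith
  have h5 := hhyp o x z y
  rcases min_le_iff.1 h5 with h | h
  · linarith
  · rw [hbal] at hboth; linarith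

end Aux

-- clog lemmas
lemma clog_two_rec {M : ℕ} (hM : 2 ≤ M) : Nat.clog 2 M = Nat.clog 2 ((M+1)/2) + 1 := by
  have h := Nat.clog_of_two_le (b := 2) one_lt_two hM
  norm_num at h
  exact h

lemma clog_mul_pow (M j : ℕ) : Nat.clog 2 M * 2^j ≤ j * 2^j + M := by
  rcases le_or_gt (Nat.clog 2 M) j with h | h
  · exact le_trans (Nat.mul_le_mul_right _ h) (Nat.le_add_right _ _)
  · set c := Nat.clog 2 M with hc
    have hc1 : 1 ≤ c := by omega
    have hM2 : 2 ^ (c-1) < M := by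
      by_contra hle
      push_neg at hle
      have := (Nat.clog_le_iff_le_pow one_lt_two).2 hle
      omega
    have h2 : c - j ≤ 2 ^ (c - 1 - j) := by
      have := Nat.lt_two_pow_self (n := c - 1 - j)
      omega
    have h3 : 2 ^ (c - 1 - j) * 2 ^ j = 2 ^ (c-1) := by
      rw [← pow_add]; congr 1; omega
    have h4 : (c - j) * 2^j ≤ 2^(c-1) := by
      calc (c - j) * 2^j ≤ 2 ^ (c-1-j) * 2^j := Nat.mul_le_mul_right _ h2
        _ = 2^(c-1) := h3
    have h5 : c * 2^j ≤ (j + (c - j)) * 2^j := Nat.mul_le_mul_right _ (by omega)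
    rw [Nat.add_mul] at h5
    omega

/-- dyadic chaining lemma -/
lemma chain_gp {X : Type*} [MetricSpace X] {δ : ℝ} (hhyp : DeltaHyperbolic X δ) (hδ : 0 ≤ δ) :
    ∀ M : ℕ, 1 ≤ M → ∀ (z : X) (x : ℕ → X) (c : ℝ),
      (∀ i < M, c ≤ gromovProd z (x i) (x (i+1))) →
      c - δ * Nat.clog 2 M ≤ gromovProd z (x 0) (x M) := by
  intro M
  induction M using Nat.strong_induction_on with
  | _ M ih =>
    intro hM z x c hc
    rcases eq_or_lt_of_le hM with h1 | h2
    · rw [← h1]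
      simpa [Nat.clog_one_right] using hc 0 (by omega)
    · set h := (M+1)/2 with hh
      have hh1 : 1 ≤ h := by omega
      have hhM : h < M := by omega
      have hMh1 : 1 ≤ M - h := by omega
      have hMhlt : M - h < M := by omega
      have hMhle : M - h ≤ h := by omega
      have A := ih h hhM hh1 z x c (fun i hi => hc i (by omega))
      have B := ih (M - h) hMhlt hMh1 z (fun i => x (h + i)) c (fun i hi => by
        show c ≤ gromovProd z (x (h + i)) (x (h + (i+1)))
        rw [← Nat.add_assoc]
        exact hc (h + i) (by omega))
      simp only [Nat.add_zero] at B
      have hsum : h + (M - h) = M := by omega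
      rw [hsum] at B
      have hmono : Nat.clog 2 (M - h) ≤ Nat.clog 2 h := Nat.clog_mono_right _ hMhle
      have hmono' : δ * (Nat.clog 2 (M - h) : ℝ) ≤ δ * (Nat.clog 2 h : ℝ) :=
        mul_le_mul_of_nonneg_left (by exact_mod_cast hmono) hδ
      have h4 := hhyp z (x 0) (x h) (x M)
      have hrec : Nat.clog 2 M = Nat.clog 2 h + 1 := clog_two_rec h2
      have hrec' : (Nat.clog 2 M : ℝ) = (Nat.clog 2 h : ℝ) + 1 := by
        rw [hrec]; push_cast; ring
      rcases min_le_iff.1 h4 with hm | hm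
      · rw [hrec']; linarith
      · rw [hrec']; linarith

noncomputable def jconst (δ K ε : ℝ) : ℕ := ⌈2*(δ+1)*(6*K + K*ε + 1)⌉₊

noncomputable def D1 (δ K ε : ℝ) : ℝ := 2*(2*δ + (K+ε) + δ * (jconst δ K ε)) + 1

lemma natdiff_cast (a b : ℕ) : ((max a b - min a b : ℕ) : ℝ) = |(a:ℝ) - (b:ℝ)| := by
  rcases le_total a b with h | h
  · rw [max_eq_right h, min_eq_left h, Nat.cast_sub h, abs_sub_comm,
      abs_of_nonneg (sub_nonneg.2 (Nat.cast_le.2 h))]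
  · rw [max_eq_left h, min_eq_right h, Nat.cast_sub h,
      abs_of_nonneg (sub_nonneg.2 (Nat.cast_le.2 h))]

lemma trap {X : Type*} [MetricSpace X] {δ K ε : ℝ}
    (hδ : 0 ≤ δ) (hK : 1 ≤ K) (hε : 0 ≤ ε) (hhyp : DeltaHyperbolic X δ)
    (r : ℕ → X)
    (hr : ∀ m n : ℕ, (1/K) * |(m:ℝ) - (n:ℝ)| - ε ≤ dist (r m) (r n) ∧
      dist (r m) (r n) ≤ K * |(m:ℝ) - (n:ℝ)| + ε)
    (n k : ℕ) (hnk : n ≤ k) (f : ℝ → X) (hf : IsGeodesicFrom f (r n) (r k)) :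
    ∀ t ∈ Icc (0:ℝ) (dist (r n) (r k)), ∃ j, n ≤ j ∧ j ≤ k ∧
      dist (f t) (r j) ≤ D1 δ K ε := by
  have hK0 : (0:ℝ) < K := lt_of_lt_of_le one_pos hK
  set L := dist (r n) (r k) with hLdef
  have hL0 : (0:ℝ) ≤ L := dist_nonneg
  have hS : (Finset.Icc n k).Nonempty := ⟨n, Finset.mem_Icc.2 ⟨le_refl n, hnk⟩⟩
  set F : ℝ → ℝ := fun u => (Finset.Icc n k).inf' hS (fun j => dist (f u) (r j)) with hFdef
  -- Lipschitz & continuity on Icc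
  have hF2 : ∀ t t' : ℝ, t ∈ Icc (0:ℝ) L → t' ∈ Icc (0:ℝ) L →
      F t ≤ F t' + dist (f t) (f t') := by
    intro t t' _ _
    obtain ⟨j', hj'S, hj'⟩ := Finset.exists_mem_eq_inf' hS (fun j => dist (f t') (r j))
    have h1 : F t ≤ dist (f t) (r j') := Finset.inf'_le _ hj'S
    have h2 : dist (f t) (r j') ≤ dist (f t) (f t') + dist (f t') (r j') :=
      dist_triangle _ _ _
    have h3 : F t' = dist (f t') (r j') := hj'
    linarith
  have hlip : LipschitzOnWith 1 F (Icc (0:ℝ) L) := by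
    apply LipschitzOnWith.of_dist_le_mul
    intro t ht t' ht'
    rw [NNReal.coe_one, one_mul, Real.dist_eq, Real.dist_eq]
    have hd : dist (f t) (f t') = |t - t'| := geod_dist_pts hf ht ht'
    have h1 := hF2 t t' ht ht'
    have h2 := hF2 t' t ht' ht
    rw [dist_comm (f t') (f t)] at h2
    rw [abs_sub_le_iff]
    constructor <;> linarith [hd ▸ h1, hd ▸ h2]
  obtain ⟨tz, htz, hmaxOn⟩ := isCompact_Icc.exists_isMaxOn
    ⟨0, left_mem_Icc.2 hL0⟩ hlip.continuousOn
  have hmax' : ∀ t ∈ Icc (0:ℝ) L, F t ≤ F tz := fun t ht => hmaxOn ht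
  set ρ := F tz with hρdef
  have hρ0 : 0 ≤ ρ := Finset.le_inf' hS _ (fun j _ => dist_nonneg)
  have hlow : ∀ j ∈ Finset.Icc n k, ρ ≤ dist (f tz) (r j) := fun j hj =>
    Finset.inf'_le _ hj
  -- tz ≥ ρ and L - tz ≥ ρ
  have htzρ : ρ ≤ tz := by
    have h1 := hlow n (Finset.mem_Icc.2 ⟨le_refl n, hnk⟩)
    have h2 : dist (f tz) (r n) = tz := by
      have h0 : (0:ℝ) ∈ Icc (0:ℝ) L := left_mem_Icc.2 hL0
      have := geod_dist_pts hf htz h0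
      rw [hf.1] at this
      rw [this, abs_of_nonneg (by linarith [htz.1] : (0:ℝ) ≤ tz - 0)]
      ring
    linarith
  have hLtzρ : ρ ≤ L - tz := by
    have h1 := hlow k (Finset.mem_Icc.2 ⟨hnk, le_refl k⟩)
    have h2 : dist (f tz) (r k) = L - tz := by
      have hL' : L ∈ Icc (0:ℝ) L := right_mem_Icc.2 hL0
      have := geod_dist_pts hf htz hL'
      rw [hf.2.1] at this
      rw [this, abs_of_nonpos (by linarith [htz.2])]
      ring
    linarith
  -- the two flanking points
  set tu := max (tz - 2*ρ) 0 with htudef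
  set tv := min (tz + 2*ρ) L with htvdef
  have htu : tu ∈ Icc (0:ℝ) L :=
    ⟨le_max_right _ _, max_le (by linarith [htz.2]) hL0⟩
  have htv : tv ∈ Icc (0:ℝ) L :=
    ⟨le_min (by linarith [htz.1]) hL0, min_le_right _ _⟩
  have htutz : tu ≤ tz := max_le (by linarith) htz.1
  have htztv : tz ≤ tv := le_min (by linarith) htz.2
  have hdzu : dist (f tz) (f tu) = tz - tu := by
    rw [geod_dist_pts hf htz htu, abs_of_nonneg (by linarith)]
  have hdzv : dist (f tz) (f tv) = tv - tz := by
    rw [geod_dist_pts hf htz htv, abs_of_nonpos (by linarith), neg_sub]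
  have hduv : dist (f tu) (f tv) = tv - tu := by
    rw [geod_dist_pts hf htu htv, abs_of_nonpos (by linarith), neg_sub]
  have huv0 : gromovProd (f tz) (f tu) (f tv) = 0 := by
    unfold gromovProd; rw [hdzu, hdzv, hduv]; ring
  -- choose ju
  have claim_u : ∃ ju, ju ∈ Finset.Icc n k ∧ dist (f tu) (r ju) ≤ ρ ∧
      ρ ≤ gromovProd (f tz) (f tu) (r ju) := by
    rcases le_or_gt (2*ρ) tz with hcase | hcase
    · obtain ⟨ju, hjuS, hju_eq⟩ := Finset.exists_mem_eq_inf' hS (fun j => dist (f tu) (r j))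
      have hd : dist (f tu) (r ju) ≤ ρ := by
        rw [← hju_eq]; exact hmax' tu htu
      have htu_eq : tu = tz - 2*ρ := max_eq_left (by linarith)
      have hgp : dist (f tz) (f tu) - dist (f tu) (r ju) ≤ gromovProd (f tz) (f tu) (r ju) :=
        sub_dist_le_gp _ _ _
      have h5 : tz - tu = 2*ρ := by rw [htu_eq]; ring
      refine ⟨ju, hjuS, hd, ?_⟩
      rw [hdzu] at hgp
      linarith
    · have htu0 : tu = 0 := max_eq_right (by linarith)
      have hfu : f tu = r n := by rw [htu0, hf.1]
      refine ⟨n, Finset.mem_Icc.2 ⟨le_refl n, hnk⟩, ?_, ?_⟩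
      · rw [hfu, dist_self]; exact hρ0
      · rw [hfu, gp_self]
        have h2 : dist (f tz) (r n) = dist (f tz) (f tu) := by rw [hfu]
        rw [h2, hdzu, htu0]
        linarith
  have claim_v : ∃ jv, jv ∈ Finset.Icc n k ∧ dist (f tv) (r jv) ≤ ρ ∧
      ρ ≤ gromovProd (f tz) (f tv) (r jv) := by
    rcases le_or_gt (2*ρ) (L - tz) with hcase | hcase
    · obtain ⟨jv, hjvS, hjv_eq⟩ := Finset.exists_mem_eq_inf' hS (fun j => dist (f tv) (r j))
      have hd : dist (f tv) (r jv) ≤ ρ := by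
        rw [← hjv_eq]; exact hmax' tv htv
      have htv_eq : tv = tz + 2*ρ := min_eq_left (by linarith)
      have hgp : dist (f tz) (f tv) - dist (f tv) (r jv) ≤ gromovProd (f tz) (f tv) (r jv) :=
        sub_dist_le_gp _ _ _
      have h5 : tv - tz = 2*ρ := by rw [htv_eq]; ring
      refine ⟨jv, hjvS, hd, ?_⟩
      rw [hdzv] at hgp
      linarith
    · have htvL : tv = L := min_eq_right (by linarith)
      have hfv : f tv = r k := by rw [htvL, hf.2.1]
      refine ⟨k, Finset.mem_Icc.2 ⟨hnk, le_refl k⟩, ?_, ?_⟩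
      · rw [hfv, dist_self]; exact hρ0
      · rw [hfv, gp_self]
        have h2 : dist (f tz) (r k) = dist (f tz) (f tv) := by rw [hfv]
        rw [h2, hdzv, htvL]
        linarith
  obtain ⟨ju, hjuS, hjud, hjugp⟩ := claim_u
  obtain ⟨jv, hjvS, hjvd, hjvgp⟩ := claim_v
  obtain ⟨hjun, hjuk⟩ := Finset.mem_Icc.1 hjuS
  obtain ⟨hjvn, hjvk⟩ := Finset.mem_Icc.1 hjvS
  -- bound on |ju - jv|
  set M2 : ℕ := max ju jv - min ju jv with hM2def
  have hd6 : dist (r ju) (r jv) ≤ 6*ρ := by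
    have t1 : dist (r ju) (r jv) ≤ dist (r ju) (f tz) + dist (f tz) (r jv) :=
      dist_triangle _ _ _
    have t2 : dist (r ju) (f tz) ≤ dist (r ju) (f tu) + dist (f tu) (f tz) :=
      dist_triangle _ _ _
    have t3 : dist (f tz) (r jv) ≤ dist (f tz) (f tv) + dist (f tv) (r jv) :=
      dist_triangle _ _ _
    have c1 : dist (r ju) (f tu) = dist (f tu) (r ju) := dist_comm _ _
    have c2 : dist (f tu) (f tz) = dist (f tz) (f tu) := dist_comm _ _
    rw [c1, c2] at t2
    have hz1 : dist (f tz) (f tu) ≤ 2*ρ := by rw [hdzu]; linarith [le_max_left (tz - 2*ρ) 0]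
    have hz2 : dist (f tz) (f tv) ≤ 2*ρ := by rw [hdzv]; linarith [min_le_left (tz + 2*ρ) L]
    linarith
  have hM2R : (M2:ℝ) ≤ K * (6*ρ + ε) := by
    have h1 := (hr ju jv).1
    have h2 : (1/K) * |(ju:ℝ) - (jv:ℝ)| ≤ 6*ρ + ε := by linarith
    have h3 : |(ju:ℝ) - (jv:ℝ)| = K * ((1/K) * |(ju:ℝ) - (jv:ℝ)|) := by
      field_simp
    rw [hM2def, natdiff_cast, h3]
    exact mul_le_mul_of_nonneg_left h2 (le_of_lt hK0)
  -- key inequality: ρ ≤ 2δ + (K+ε) + δ clog M2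
  have hδclog : (0:ℝ) ≤ δ * (Nat.clog 2 M2 : ℝ) :=
    mul_nonneg hδ (Nat.cast_nonneg _)
  have hgv' : ρ ≤ gromovProd (f tz) (r jv) (f tv) := by
    rw [gp_comm]; exact hjvgp
  have hgu' : ρ ≤ gromovProd (f tz) (f tu) (r ju) := hjugp
  have hA := hhyp (f tz) (f tu) (r ju) (f tv)
  rw [huv0] at hA
  have hkey : ρ ≤ 2*δ + (K+ε) + δ * (Nat.clog 2 M2 : ℝ) := by
    rcases min_le_iff.1 hA with h | h
    · linarith
    · -- gromovProd (f tz) (r ju) (f tv) ≤ δ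
      rcases Nat.eq_zero_or_pos M2 with hM20 | hM2pos
      · -- ju = jv
        have hjujv : ju = jv := by omega
        have : ρ ≤ gromovProd (f tz) (r ju) (f tv) := by
          rw [hjujv]; exact hgv'
        linarith
      · -- chain estimate on gromovProd (f tz) (r ju) (r jv)
        set a := min ju jv with hadef
        set b := max ju jv with hbdef
        have hchain : ρ - (K+ε) - δ * (Nat.clog 2 M2 : ℝ) ≤
            gromovProd (f tz) (r a) (r b) := by
          have hmain := chain_gp hhyp hδ M2 hM2pos (f tz)
            (fun i => r (min (a + i) b)) (ρ - (K+ε)) ?_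
          · have hx0 : min (a + 0) b = a := by omega
            have hxM : min (a + M2) b = b := by omega
            simpa only [hx0, hxM] using hmain
          · intro i _
            show ρ - (K+ε) ≤ gromovProd (f tz) (r (min (a + i) b)) (r (min (a + (i+1)) b))
            have hm1 : n ≤ min (a + i) b := by omega
            have hm2 : min (a + i) b ≤ k := by omega
            have h12 : min (a + i) b ≤ min (a + (i+1)) b ∧
                min (a + (i+1)) b ≤ min (a + i) b + 1 := by omega
            have habs1 : |((min (a + i) b : ℕ):ℝ) - ((min (a + (i+1)) b : ℕ):ℝ)| ≤ 1 := by
              rw [abs_sub_comm, abs_of_nonneg (sub_nonneg.2 (Nat.cast_le.2 h12.1))]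
              have hc : ((min (a + (i+1)) b : ℕ):ℝ) ≤ ((min (a + i) b : ℕ):ℝ) + 1 := by
                exact_mod_cast h12.2
              linarith
            have hdistle : dist (r (min (a + i) b)) (r (min (a + (i+1)) b)) ≤ K + ε := by
              have h2 := (hr (min (a + i) b) (min (a + (i+1)) b)).2
              have h3 := mul_le_mul_of_nonneg_left habs1 (le_of_lt hK0)
              linarith
            have hsub := sub_dist_le_gp (f tz) (r (min (a + i) b)) (r (min (a + (i+1)) b))
            have hlow1 : ρ ≤ dist (f tz) (r (min (a + i) b)) :=
              hlow _ (Finset.mem_Icc.2 ⟨hm1, hm2⟩)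
            linarith
        have hch' : ρ - (K+ε) - δ * (Nat.clog 2 M2 : ℝ) ≤
            gromovProd (f tz) (r ju) (r jv) := by
          rcases le_total ju jv with hj | hj
          · have ha' : a = ju := min_eq_left hj
            have hb' : b = jv := max_eq_right hj
            rwa [ha', hb'] at hchain
          · have ha' : a = jv := min_eq_right hj
            have hb' : b = ju := max_eq_left hj
            rw [ha', hb'] at hchain
            rwa [gp_comm] at hchain
        have hB := hhyp (f tz) (r ju) (r jv) (f tv)
        rcases min_le_iff.1 hB with h2 | h2
        · linarith
        · linarith
  -- final arithmetic : ρ ≤ D1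
  have hρD1 : ρ ≤ D1 δ K ε := by
    set J := jconst δ K ε with hJdef
    set P := (2:ℝ)^J with hPdef
    have hD1val : D1 δ K ε = 2*(2*δ + (K+ε) + δ*(J:ℝ)) + 1 := by
      rw [hJdef]; rfl
    have hP0 : (0:ℝ) < P := by positivity
    have hP : 2*(δ+1)*(6*K + K*ε + 1) ≤ P := by
      have h1 : 2*(δ+1)*(6*K + K*ε + 1) ≤ (J:ℝ) := Nat.le_ceil _
      have h2 : (J:ℝ) ≤ P := by
        rw [hPdef]
        have h3 : (J:ℝ) < ((2^J : ℕ):ℝ) := by exact_mod_cast Nat.lt_two_pow_self (n := J)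
        push_cast at h3
        linarith
      linarith
    have hclogP : (Nat.clog 2 M2 : ℝ) * P ≤ (J:ℝ)*P + (M2:ℝ) := by
      have h1 : ((Nat.clog 2 M2 * 2^J : ℕ):ℝ) ≤ ((J * 2^J + M2 : ℕ):ℝ) := by
        exact_mod_cast clog_mul_pow M2 J
      push_cast at h1
      rw [hPdef]
      linarith
    have hδK : (0:ℝ) ≤ δ*K := mul_nonneg hδ (le_of_lt hK0)
    have hKε : (0:ℝ) ≤ K*ε := mul_nonneg (le_of_lt hK0) hε
    have hδKε : (0:ℝ) ≤ δ*(K*ε) := mul_nonneg hδ hKε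
    have e0 : 2*(δ+1)*(6*K + K*ε + 1) =
        12*(δ*K) + 2*(δ*(K*ε)) + 2*δ + 12*K + 2*(K*ε) + 2 := by ring
    have c4 : 6*(δ*K) ≤ P/2 := by rw [e0] at hP; linarith
    have c5 : δ*(K*ε) ≤ P/2 := by rw [e0] at hP; linarith
    have c0 : ρ * P ≤ (2*δ + (K+ε))*P + δ*((Nat.clog 2 M2 : ℝ)*P) := by
      have h1 := mul_le_mul_of_nonneg_right hkey (le_of_lt hP0)
      have h2 : (2*δ + (K+ε) + δ*(Nat.clog 2 M2 : ℝ))*P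
          = (2*δ + (K+ε))*P + δ*((Nat.clog 2 M2 : ℝ)*P) := by ring
      linarith
    have c1 : δ*((Nat.clog 2 M2 : ℝ)*P) ≤ δ*((J:ℝ)*P) + δ*(M2:ℝ) := by
      have h1 := mul_le_mul_of_nonneg_left hclogP hδ
      have h2 : δ*((J:ℝ)*P + (M2:ℝ)) = δ*((J:ℝ)*P) + δ*(M2:ℝ) := by ring
      linarith
    have c2 : δ*(M2:ℝ) ≤ 6*(δ*K)*ρ + δ*(K*ε) := by
      have h1 := mul_le_mul_of_nonneg_left hM2R hδ
      have h2 : δ*(K*(6*ρ+ε)) = 6*(δ*K)*ρ + δ*(K*ε) := by ring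
      linarith
    have c6 : 6*(δ*K)*ρ ≤ (P/2)*ρ := mul_le_mul_of_nonneg_right c4 hρ0
    have c7 : (P/2)*ρ ≤ (2*δ + (K+ε) + δ*(J:ℝ))*P + P/2 := by
      have h2 : (2*δ + (K+ε) + δ*(J:ℝ))*P = (2*δ + (K+ε))*P + δ*((J:ℝ)*P) := by ring
      have h3 : ρ * P - (P/2)*ρ = (P/2)*ρ := by ring
      linarith
    have c8 : (P/2)*ρ ≤ (P/2)*(D1 δ K ε) := by
      rw [hD1val]
      have h2 : (P/2)*(2*(2*δ + (K+ε) + δ*(J:ℝ)) + 1)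
          = (2*δ + (K+ε) + δ*(J:ℝ))*P + P/2 := by ring
      linarith
    exact le_of_mul_le_mul_left c8 (by linarith)
  -- conclude
  intro t ht
  obtain ⟨j, hjS, hj_eq⟩ := Finset.exists_mem_eq_inf' hS (fun j => dist (f t) (r j))
  have hFt : dist (f t) (r j) ≤ ρ := by
    rw [← hj_eq]; exact hmax' t ht
  obtain ⟨hj1, hj2⟩ := Finset.mem_Icc.1 hjS
  exact ⟨j, hj1, hj2, le_trans hFt hρD1⟩

/-- in a proper δ-hyperbolic geodesic space, let `r : ℕ → X` be a
`(K,ε)`-quasigeodesic ray, and let `γₙ` be geodesic segments (from `pₙ` to `qₙ`) which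
leave every bounded set, whose endpoint sequences converge to a single boundary point
`a = b` (expressed via Gromov products tending to infinity), and which meet the
`α`-neighborhood of the tail `r([mₙ,∞))` with `mₙ → ∞`.  Then `r(n)` converges to the
same boundary point: the Gromov products of `r` with the endpoint sequence tend to
infinity. -/
theorem ray_converges_to_common_limit
    {X : Type*} [MetricSpace X] [ProperSpace X] (δ K ε α : ℝ)
    (hδ : 0 ≤ δ) (hK : 1 ≤ K) (hε : 0 ≤ ε) (hα : 0 ≤ α)
    (hgeo : GeodesicSpace X) (hhyp : DeltaHyperbolic X δ)
    (o : X) (r : ℕ → X)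
    (hr : ∀ m n : ℕ, (1/K) * |(m:ℝ) - (n:ℝ)| - ε ≤ dist (r m) (r n) ∧
      dist (r m) (r n) ≤ K * |(m:ℝ) - (n:ℝ)| + ε)
    (p q : ℕ → X) (γ : ℕ → ℝ → X)
    (hγ : ∀ n, IsGeodesicFrom (γ n) (p n) (q n))
    (hpq : Filter.Tendsto (fun mn : ℕ × ℕ => gromovProd o (p mn.1) (q mn.2))
      Filter.atTop Filter.atTop)
    (hpp : Filter.Tendsto (fun mn : ℕ × ℕ => gromovProd o (p mn.1) (p mn.2))
      Filter.atTop Filter.atTop)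
    (hexit : ∀ R : ℝ, ∃ N : ℕ, ∀ n ≥ N, ∀ t ∈ Icc (0:ℝ) (dist (p n) (q n)),
      R ≤ dist o (γ n t))
    (m : ℕ → ℕ) (hm : Filter.Tendsto m Filter.atTop Filter.atTop)
    (hmeet : ∀ n : ℕ, ∃ t ∈ Icc (0:ℝ) (dist (p n) (q n)), ∃ k ≥ m n,
      dist (γ n t) (r k) ≤ α) :
    Filter.Tendsto (fun nk : ℕ × ℕ => gromovProd o (r nk.1) (p nk.2))
      Filter.atTop Filter.atTop := by
  have hK0 : (0:ℝ) < K := lt_of_lt_of_le one_pos hK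
  set C0 : ℝ := ε + dist o (r 0) + D1 δ K ε + 2*δ with hC0
  -- Step 1 : tail Gromov products along the ray
  have ray_gp : ∀ n k : ℕ, n ≤ k → (n:ℝ)/K - C0 ≤ gromovProd o (r n) (r k) := by
    intro n k hnk
    obtain ⟨f, hf0, hfL, hfd⟩ := hgeo (r n) (r k)
    have hf : IsGeodesicFrom f (r n) (r k) := ⟨hf0, hfL, hfd⟩
    have hfar : ∀ t ∈ Icc (0:ℝ) (dist (r n) (r k)),
        ((n:ℝ)/K - (ε + dist o (r 0)) - D1 δ K ε) ≤ dist o (f t) := by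
      intro t ht
      obtain ⟨j, hj1, hj2, hjd⟩ := trap hδ hK hε hhyp r hr n k hnk f hf t ht
      have h1 := (hr j 0).1
      have habs : |(j:ℝ) - ((0:ℕ):ℝ)| = (j:ℝ) := by simp
      rw [habs] at h1
      have htri : dist (r j) (r 0) ≤ dist (r j) o + dist o (r 0) := dist_triangle _ _ _
      have hcomm : dist (r j) o = dist o (r j) := dist_comm _ _
      have h3 : dist o (r j) ≤ dist o (f t) + dist (f t) (r j) := dist_triangle _ _ _
      have h4 : (n:ℝ)/K ≤ (j:ℝ)/K := by
        have : (n:ℝ) ≤ (j:ℝ) := by exact_mod_cast hj1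
        gcongr
      have h5 : (1/K) * (j:ℝ) = (j:ℝ)/K := by ring
      linarith
    have := gp_ge_of_far hδ hhyp hf o hfar
    rw [hC0]
    linarith
  -- Step 2+3 assembly
  rw [Filter.tendsto_atTop]
  intro T
  set R : ℝ := T + α + 3*δ + 1 with hRdef
  obtain ⟨Ne, hNe⟩ := hexit R
  obtain ⟨apq, hapq⟩ := Filter.eventually_atTop.1 (Filter.tendsto_atTop.1 hpq R)
  obtain ⟨app, happ⟩ := Filter.eventually_atTop.1 (Filter.tendsto_atTop.1 hpp R)
  set N1 : ℕ := max (max Ne (max apq.1 apq.2)) (max app.1 app.2) with hN1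
  have hNeN1 : Ne ≤ N1 := by omega
  have hapq1 : apq.1 ≤ N1 := by omega
  have hapq2 : apq.2 ≤ N1 := by omega
  have happ1 : app.1 ≤ N1 := by omega
  have happ2 : app.2 ≤ N1 := by omega
  -- touch point estimate
  have step2 : ∀ i, N1 ≤ i → ∃ kk, m i ≤ kk ∧
      ∀ j, N1 ≤ j → T + δ ≤ gromovProd o (r kk) (p j) := by
    intro i hi
    obtain ⟨t, ht, kk, hkk, hdistm⟩ := hmeet i
    refine ⟨kk, hkk, ?_⟩
    intro j hj
    have hx : R ≤ dist o (γ i t) := hNe i (le_trans hNeN1 hi) t ht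
    have g1 : R - α ≤ gromovProd o (γ i t) (r kk) := by
      have := sub_dist_le_gp o (γ i t) (r kk)
      linarith
    have g2 : R ≤ gromovProd o (p i) (γ i t) := by
      have hmono := gp_point_ge (hγ i) ht o
      have hpqi : R ≤ gromovProd o (p i) (q i) :=
        hapq (i, i) ⟨le_trans hapq1 hi, le_trans hapq2 hi⟩
      linarith
    have g3 : R ≤ gromovProd o (p i) (p j) :=
      happ (i, j) ⟨le_trans happ1 hi, le_trans happ2 hj⟩
    have g4 : R - α - 2*δ ≤ gromovProd o (r kk) (p j) := by
      have h45 := hyp4 hhyp o (γ i t) (p i) (p j)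
      have g2' : R ≤ gromovProd o (γ i t) (p i) := by rw [gp_comm]; exact g2
      have hmin1 : R - δ ≤ gromovProd o (γ i t) (p j) := by
        have : R ≤ min (gromovProd o (γ i t) (p i)) (gromovProd o (p i) (p j)) :=
          le_min g2' g3
        linarith
      have h46 := hyp4 hhyp o (r kk) (γ i t) (p j)
      have g1' : R - α ≤ gromovProd o (r kk) (γ i t) := by rw [gp_comm]; exact g1
      have : R - α - δ ≤ min (gromovProd o (r kk) (γ i t)) (gromovProd o (γ i t) (p j)) :=
        le_min (by linarith) (by linarith)
      linarith
    rw [hRdef] at g4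
    linarith
  -- ray threshold
  set N2 : ℕ := ⌈K*(T + δ + C0)⌉₊ with hN2
  set N : ℕ := max N2 N1 with hN
  rw [Filter.eventually_atTop]
  refine ⟨(N, N), ?_⟩
  rintro ⟨n, j⟩ hnj
  obtain ⟨hn, hj⟩ := Prod.mk_le_mk.1 hnj
  obtain ⟨Im, hIm⟩ := Filter.eventually_atTop.1 (Filter.tendsto_atTop.1 hm n)
  obtain ⟨kk, hkk, hstep2⟩ := step2 (max N1 Im) (le_max_left _ _)
  have hkkn : n ≤ kk := le_trans (hIm (max N1 Im) (le_max_right _ _)) hkk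
  have hray : T + δ ≤ gromovProd o (r n) (r kk) := by
    have h1 := ray_gp n kk hkkn
    have h2 : K*(T + δ + C0) ≤ (n:ℝ) := by
      have h3 : (N2:ℝ) ≤ (n:ℝ) := by exact_mod_cast le_trans (le_max_left N2 N1) hn
      have h4 : K*(T + δ + C0) ≤ (N2:ℝ) := Nat.le_ceil _
      linarith
    have h5 : T + δ + C0 ≤ (n:ℝ)/K := by
      rw [le_div_iff₀ hK0]
      linarith [h2]
    linarith
  have hpj : T + δ ≤ gromovProd o (r kk) (p j) :=
    hstep2 j (le_trans (le_max_right N2 N1) hj)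
  have hfin := hyp4 hhyp o (r n) (r kk) (p j)
  have : T + δ ≤ min (gromovProd o (r n) (r kk)) (gromovProd o (r kk) (p j)) :=
    le_min hray hpj
  show T ≤ gromovProd o (r n) (p j)
  linarith
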